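/- arXiv:1811.01413 — 2 statements merged into one kernel-verified Lean document; each statement's English description precedes it below -/
import Mathlib

section
/- Let G be a group and H a subgroup of G of finite index n. Then there exist a group homomorphism φ from G to the alternating group on 2 · n! letters (alternatingGroup (Fin (2 · n!))) and a subgroup J of that alternating group such that H is exactly the preimage φ⁻¹(J). -/
/-!
`G` acts on the `n` cosets of `H`, and `H` is the stabilizer of the trivial coset, so `H` is
the preimage of a point stabilizer under `G → Perm (G ⧸ H)`. Doubling a permutation `σ` to
`σ ⊕ σ` makes it even, so `Perm (G ⧸ H)` embeds into the alternating group on any set with at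
least `2 n ≤ 2 n!` elements, and the preimage of a subgroup survives pushing it forward along
an injective homomorphism.
-/

open Equiv Equiv.Perm

namespace Equiv.Perm

variable (α : Type*) [Fintype α] [DecidableEq α]

/-- `σ ⊕ σ` is even: its sign is `sign σ ^ 2 = 1`. -/
def sumCongrDiagHom : Perm α →* alternatingGroup (α ⊕ α) :=
  ((sumCongrHom α α).comp ((MonoidHom.id _).prod (MonoidHom.id _))).codRestrict _ fun σ => by
    simp [mem_alternatingGroup, sign_sumCongr, Int.units_mul_self]

theorem sumCongrDiagHom_injective : Function.Injective (sumCongrDiagHom α) := fun _ _ h =>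
  congrArg Prod.fst (sumCongrHom_injective (congrArg Subtype.val h))

variable {α} {β : Type*} [Fintype β] [DecidableEq β]

/-- Extending along an embedding preserves the sign. -/
noncomputable def alternatingGroupViaEmbeddingHom (ι : α ↪ β) : alternatingGroup α →* alternatingGroup β :=
  ((viaEmbeddingHom ι).comp (alternatingGroup α).subtype).codRestrict _ fun σ => by
    simp [mem_alternatingGroup, viaEmbeddingHom_apply, viaEmbedding, sign_extendDomain,
      mem_alternatingGroup.mp σ.2]

theorem alternatingGroupViaEmbeddingHom_injective (ι : α ↪ β) :
    Function.Injective (alternatingGroupViaEmbeddingHom ι) := fun _ _ h =>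
  Subtype.val_injective (viaEmbeddingHom_injective ι (congrArg Subtype.val h))

theorem exists_injective_hom_alternatingGroup (h : 2 * Fintype.card α ≤ Fintype.card β) :
    ∃ ψ : Perm α →* alternatingGroup β, Function.Injective ψ := by
  obtain ⟨ι⟩ : Nonempty (α ⊕ α ↪ β) :=
    Function.Embedding.nonempty_of_card_le (by rwa [Fintype.card_sum, ← two_mul])
  exact ⟨(alternatingGroupViaEmbeddingHom ι).comp (sumCongrDiagHom α),
    (alternatingGroupViaEmbeddingHom_injective ι).comp (sumCongrDiagHom_injective α)⟩

end Equiv.Perm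

namespace Subgroup

variable {G K L : Type*} [Group G] [Group K] [Group L]

theorem comap_map_comp_of_injective (J : Subgroup K) (f : G →* K) {ψ : K →* L}
    (hψ : Function.Injective ψ) : (J.map ψ).comap (ψ.comp f) = J.comap f := by
  rw [← comap_comap, comap_map_eq_self_of_injective hψ]

theorem comap_toPermHom_stabilizer_quotient (H : Subgroup G) :
    (MulAction.stabilizer (Perm (G ⧸ H)) ((1 : G) : G ⧸ H)).comap
      (MulAction.toPermHom G (G ⧸ H)) = H := by
  ext g
  conv_rhs => rw [← MulAction.stabilizer_quotient H]
  rfl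

end Subgroup

/-- A subgroup of finite index `n` is the preimage of a subgroup of the
alternating group on `2 · n!` letters under some homomorphism. -/
theorem stmt_7 {G : Type*} [Group G] (H : Subgroup G) (n : ℕ)
    (hn : H.index = n) (hpos : 0 < n) :
    ∃ (φ : G →* alternatingGroup (Fin (2 * Nat.factorial n)))
      (J : Subgroup (alternatingGroup (Fin (2 * Nat.factorial n)))),
      H = J.comap φ := by
  classical
  have : Finite (G ⧸ H) := Nat.finite_of_card_ne_zero (by rw [← Subgroup.index]; omega)
  have : Fintype (G ⧸ H) := Fintype.ofFinite _
  have hcard : 2 * Fintype.card (G ⧸ H) ≤ Fintype.card (Fin (2 * n.factorial)) := by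
    rw [← Nat.card_eq_fintype_card, ← Subgroup.index, hn, Fintype.card_fin]
    exact Nat.mul_le_mul_left 2 n.self_le_factorial
  obtain ⟨ψ, hψ⟩ := exists_injective_hom_alternatingGroup hcard
  refine ⟨ψ.comp (MulAction.toPermHom G (G ⧸ H)),
    (MulAction.stabilizer (Perm (G ⧸ H)) ((1 : G) : G ⧸ H)).map ψ, ?_⟩
  rw [Subgroup.comap_map_comp_of_injective _ _ hψ, Subgroup.comap_toPermHom_stabilizer_quotient]
end

section
/- Let G be a finite group in which every element is a commutator, let c ∈ G, and let h and m be natural numbers with m ≥ 1 and with h ≥ 1 or m ≥ 2. Then the number of tuples (a₁, b₁, …, a_h, b_h, c₁, …, c_{m−1}) ∈ G^{2h + m − 1} satisfying [a₁, b₁] · [a₂, b₂] ⋯ [a_h, b_h] · c₁ · c₂ ⋯ c_{m−1} = c is at least |G|^{2h + m − 3}. -/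
/-!
Every solution of `[a₁,b₁]⋯[a_h,b_h]·c₁⋯c_{m-1} = c` is determined by all but its last letter
(or last pair of letters), and conversely every choice of those others extends to a solution:
for `m ≥ 2` the relation can be solved for `c_{m-1}`, and for `m = 1` the missing commutator
`[a_h, b_h]` exists because every element of `G` is a commutator. So the free letters inject
into the solution set.
-/

theorem Nat.card_le_card_subtype_of_extend {α β X : Type*} [Finite X] {P : X → Prop}
    (extend : α → β → X) (h_inj : ∀ a a' b b', extend a b = extend a' b' → a = a')
    (h_ext : ∀ a, ∃ b, P (extend a b)) : Nat.card α ≤ Nat.card {x // P x} := by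
  choose b hb using h_ext
  exact Nat.card_le_card_of_injective (fun a => ⟨extend a (b a), hb a⟩)
    fun a a' h => h_inj a a' _ _ (congrArg Subtype.val h)

theorem List.prod_ofFn_snoc {M : Type*} [Monoid M] {n : ℕ} (g : Fin n → M) (x : M) :
    (List.ofFn (Fin.snoc g x : Fin (n + 1) → M)).prod = (List.ofFn g).prod * x := by
  simp only [List.ofFn_succ', List.prod_concat, Fin.snoc_castSucc, Fin.snoc_last]

section SurfaceRelation

variable {G : Type*} [Group G]

def commutatorProd {h : ℕ} (a b : Fin h → G) : G :=
  (List.ofFn fun i => a i * b i * (a i)⁻¹ * (b i)⁻¹).prod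

theorem commutatorProd_snoc {h : ℕ} (a b : Fin h → G) (A B : G) :
    commutatorProd (Fin.snoc a A : Fin (h + 1) → G) (Fin.snoc b B) =
      commutatorProd a b * (A * B * A⁻¹ * B⁻¹) := by
  simp only [commutatorProd, List.ofFn_succ', List.prod_concat, Fin.snoc_castSucc, Fin.snoc_last]

variable [Finite G]

theorem card_pow_le_card_solutions_succ_letters (c : G) (h k : ℕ) :
    Nat.card G ^ (2 * h + k) ≤
      Nat.card {t : (Fin h → G) × (Fin h → G) × (Fin (k + 1) → G) //
        commutatorProd t.1 t.2.1 * (List.ofFn t.2.2).prod = c} := by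
  have h_card : Nat.card ((Fin h → G) × (Fin h → G) × (Fin k → G)) = Nat.card G ^ (2 * h + k) := by
    simp only [Nat.card_prod, Nat.card_fun, Nat.card_eq_fintype_card, Fintype.card_fin]
    ring
  rw [← h_card]
  refine Nat.card_le_card_subtype_of_extend (fun t x => (t.1, t.2.1, Fin.snoc t.2.2 x))
    (fun t t' x x' h => ?_) fun ⟨a, b, d⟩ => ⟨(commutatorProd a b * (List.ofFn d).prod)⁻¹ * c, ?_⟩
  · simp only [Prod.mk.injEq, Fin.snoc_inj] at h
    exact Prod.ext h.1 (Prod.ext h.2.1 h.2.2.1)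
  · simp only [List.prod_ofFn_snoc]
    group

theorem card_pow_le_card_solutions_succ_genus (hcomm : ∀ g : G, ∃ a b : G, g = a * b * a⁻¹ * b⁻¹)
    (c : G) (j : ℕ) :
    Nat.card G ^ (2 * j) ≤
      Nat.card {t : (Fin (j + 1) → G) × (Fin (j + 1) → G) × (Fin 0 → G) //
        commutatorProd t.1 t.2.1 * (List.ofFn t.2.2).prod = c} := by
  have h_card : Nat.card ((Fin j → G) × (Fin j → G)) = Nat.card G ^ (2 * j) := by
    simp only [Nat.card_prod, Nat.card_fun, Nat.card_eq_fintype_card, Fintype.card_fin]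
    ring
  rw [← h_card]
  refine Nat.card_le_card_subtype_of_extend
    (fun t (x : G × G) => (Fin.snoc t.1 x.1, Fin.snoc t.2 x.2, 1)) (fun t t' x x' h => ?_)
    fun ⟨a, b⟩ => ?_
  · simp only [Prod.mk.injEq, Fin.snoc_inj] at h
    exact Prod.ext h.1.1 h.2.1.1
  · obtain ⟨A, B, hAB⟩ := hcomm ((commutatorProd a b)⁻¹ * c)
    refine ⟨(A, B), ?_⟩
    simp [commutatorProd_snoc, ← hAB]

end SurfaceRelation

/-- Counting solutions of the surface relation: in a finite group in which every
element is a commutator, the equation `[a₁,b₁]⋯[a_h,b_h]·c₁⋯c_{m-1} = c` has at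
least `|G|^(2h+m-3)` solutions, provided `m ≥ 1` and (`h ≥ 1` or `m ≥ 2`). -/
theorem stmt_10 {G : Type*} [Group G] [Fintype G]
    (hcomm : ∀ g : G, ∃ a b : G, g = a * b * a⁻¹ * b⁻¹)
    (c : G) (h m : ℕ) (hm : 1 ≤ m) (hhm : 1 ≤ h ∨ 2 ≤ m) :
    Fintype.card G ^ (2 * h + m - 3) ≤
      Nat.card {t : (Fin h → G) × (Fin h → G) × (Fin (m - 1) → G) //
        (List.ofFn (fun i : Fin h =>
            t.1 i * t.2.1 i * (t.1 i)⁻¹ * (t.2.1 i)⁻¹)).prod *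
          (List.ofFn t.2.2).prod = c} := by
  rw [← Nat.card_eq_fintype_card]
  rcases Nat.lt_or_ge m 2 with hm1 | hm2
  · obtain rfl : m = 1 := by omega
    obtain ⟨j, rfl⟩ : ∃ j, h = j + 1 := ⟨h - 1, by omega⟩
    calc Nat.card G ^ (2 * (j + 1) + 1 - 3)
        = Nat.card G ^ (2 * j) := by congr 1
      _ ≤ _ := card_pow_le_card_solutions_succ_genus hcomm c j
  · obtain ⟨k, rfl⟩ : ∃ k, m = k + 2 := ⟨m - 2, by omega⟩
    calc Nat.card G ^ (2 * h + (k + 2) - 3)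
        ≤ Nat.card G ^ (2 * h + k) := Nat.pow_le_pow_right Nat.card_pos (by omega)
      _ ≤ _ := card_pow_le_card_solutions_succ_letters c h k
end
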